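/- Let M be a matroid on a finite linearly ordered set E. The intervals [B \ Int_M(B), B ∪ Ext_M(B)], as B ranges over the bases of M, partition 2^E. -/

import Mathlib

open Set

/-- `e` is the smallest element of `C`. -/
def SmallestIn {α : Type*} [LinearOrder α] (e : α) (C : Set α) : Prop :=
  e ∈ C ∧ ∀ f ∈ C, e ≤ f

/-- `C` is a circuit of `M`: a minimal dependent set. -/
def IsCircuit {α : Type*} (M : Matroid α) (C : Set α) : Prop :=
  ¬ M.Indep C ∧ ∀ x ∈ C, M.Indep (C \ {x})

/-- A cocircuit is a circuit of the dual matroid. -/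
def IsCocircuit {α : Type*} (M : Matroid α) (C : Set α) : Prop :=
  IsCircuit M✶ C

/-- `P_M(A)`: elements outside `A` that are smallest in some cocircuit avoiding `A`. -/
def Pset {α : Type*} [LinearOrder α] (M : Matroid α) (A : Set α) : Set α :=
  {e | e ∉ A ∧ ∃ C, IsCocircuit M C ∧ C ⊆ Aᶜ ∧ SmallestIn e C}

/-- `Q_M(A)`: elements of `A` that are smallest in some circuit contained in `A`. -/
def Qset {α : Type*} [LinearOrder α] (M : Matroid α) (A : Set α) : Set α :=
  {e | e ∈ A ∧ ∃ C, IsCircuit M C ∧ C ⊆ A ∧ SmallestIn e C}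

/-- Externally active elements of `A`. -/
def ExtSet {α : Type*} [LinearOrder α] (M : Matroid α) (A : Set α) : Set α :=
  {e | e ∉ A ∧ ∃ C, IsCircuit M C ∧ C ⊆ A ∪ {e} ∧ SmallestIn e C}

/-- Internally active elements of `A`. -/
def IntSet {α : Type*} [LinearOrder α] (M : Matroid α) (A : Set α) : Set α :=
  {e | e ∈ A ∧ ∃ C, IsCocircuit M C ∧ C ⊆ Aᶜ ∪ {e} ∧ SmallestIn e C}

/-- The rank of a set: the largest cardinality of an independent subset. -/
noncomputable def rk {α : Type*} (M : Matroid α) (A : Set α) : ℕ :=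
  sSup (Set.ncard '' {I | I ⊆ A ∧ M.Indep I})

/-- Matroid perspective (strong-map / quotient condition, form (MP3)). -/
def Perspective {α : Type*} (M M' : Matroid α) : Prop :=
  ∀ C D : Set α, IsCircuit M C → IsCocircuit M' D → (C ∩ D).ncard ≠ 1

/-- Rank codrop of a subset in a matroid perspective. -/
noncomputable def rcd {α : Type*} (M M' : Matroid α) (A : Set α) : ℕ :=
  ((rk M Set.univ : ℤ) - rk M' Set.univ - ((rk M A : ℤ) - rk M' A)).toNat

/-!
For a base `B`, an element `e ∈ B` is internally active iff it lies in the `M✶`-closure of the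
elements of `Bᶜ` above `e`, and `e ∉ B` is externally active iff it lies in the `M`-closure of
the elements of `B` above `e`. Hence `A` lies in the interval of `B` iff, reading `E` from the top
down, each `e` belongs to `B` exactly when either `e ∈ A` and `e` is not spanned by the part of
`B` above it, or `e ∉ A` and `e` is cospanned by the part of `Bᶜ` above it. Such a rule
determines a unique set by downward recursion, and that set is a base: a circuit in it, or a
cocircuit in its complement, would at its least element meet a cocircuit, or a circuit, in
exactly that element.
-/

section

variable {α : Type*} {M : Matroid α} {A B C I S X Y : Set α} {e : α}

theorem isCircuit_iff_isCircuit (hC : C ⊆ M.E) : IsCircuit M C ↔ M.IsCircuit C := by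
  rw [Matroid.isCircuit_iff_dep_forall_sdiff_singleton_indep, ← Matroid.not_indep_iff hC]
  rfl

theorem notMem_dual_closure_of_mem_closure (hXY : Disjoint X Y) (heX : e ∉ X) (heY : e ∉ Y)
    (he : e ∈ M.closure X) : e ∉ M✶.closure Y := by
  intro he'
  obtain ⟨C, hCX, hC, heC⟩ := Matroid.exists_isCircuit_of_mem_closure he heX
  obtain ⟨K, hKY, hK, heK⟩ := Matroid.exists_isCircuit_of_mem_closure he' heY
  refine hC.inter_isCocircuit_ne_singleton hK (e := e) (subset_antisymm ?_ ?_)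
  · rintro f ⟨hfC, hfK⟩
    by_contra hfe
    exact hXY.notMem_of_mem_left ((hCX hfC).resolve_left hfe) ((hKY hfK).resolve_left hfe)
  · exact singleton_subset_iff.2 ⟨heC, heK⟩

variable [LinearOrder α]

theorem mem_insert_inter_Ioi_iff {f : α} : f ∈ insert e (X ∩ Ioi e) ↔ f ∈ X ∪ {e} ∧ e ≤ f := by
  rcases eq_or_ne f e with rfl | hfe
  · simp
  · simp [hfe, lt_iff_le_and_ne, Ne.symm hfe]

theorem mem_extSet_iff (hX : X ⊆ M.E) (he : e ∈ M.E) :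
    e ∈ ExtSet M X ↔ e ∉ X ∧ e ∈ M.closure (X ∩ Ioi e) := by
  refine and_congr_right fun _ => ?_
  rw [Matroid.mem_closure_iff_exists_isCircuit fun h => lt_irrefl e h.2]
  refine exists_congr fun C => ⟨?_, ?_⟩
  · rintro ⟨hC, hCX, heC, hmin⟩
    refine ⟨fun f hf => mem_insert_inter_Ioi_iff.2 ⟨hCX hf, hmin f hf⟩, ?_, heC⟩
    exact (isCircuit_iff_isCircuit <|
      hCX.trans (union_subset hX (singleton_subset_iff.2 he))).1 hC
  · rintro ⟨hCX, hC, heC⟩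
    have hC' (f : α) (hf : f ∈ C) := mem_insert_inter_Ioi_iff.1 (hCX hf)
    exact ⟨(isCircuit_iff_isCircuit hC.subset_ground).2 hC, fun f hf => (hC' f hf).1, heC,
      fun f hf => (hC' f hf).2⟩

theorem intSet_eq_extSet_dual : IntSet M B = ExtSet M✶ Bᶜ := by
  ext e
  simp [IntSet, ExtSet, IsCocircuit]

theorem mem_intSet_iff (hE : M.E = univ) :
    e ∈ IntSet M B ↔ e ∈ B ∧ e ∈ M✶.closure (Bᶜ ∩ Ioi e) := by
  rw [intSet_eq_extSet_dual, mem_extSet_iff (by simp [hE]) (by simp [hE]), mem_compl_iff, not_not]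

theorem Matroid.Indep.notMem_closure_inter_Ioi (hI : M.Indep I) (he : e ∈ I) :
    e ∉ M.closure (I ∩ Ioi e) := fun hcl =>
  hI.notMem_closure_sdiff_of_mem he
    (M.closure_subset_closure (show I ∩ Ioi e ⊆ I \ {e} from fun _ hx => ⟨hx.1, hx.2.ne'⟩) hcl)

theorem notMem_dual_closure_compl_inter_Ioi (he : e ∈ M.closure (S ∩ Ioi e)) :
    e ∉ M✶.closure (Sᶜ ∩ Ioi e) :=
  notMem_dual_closure_of_mem_closure
    (disjoint_compl_right.mono inter_subset_left inter_subset_left)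
    (fun h => lt_irrefl e h.2) (fun h => lt_irrefl e h.2) he

theorem indep_of_forall_notMem_closure_inter_Ioi [WellFoundedLT α] (hX : X ⊆ M.E)
    (h : ∀ e ∈ X, e ∉ M.closure (X ∩ Ioi e)) : M.Indep X := by
  by_contra hdep
  obtain ⟨C, hCX, hC⟩ := ((Matroid.not_indep_iff hX).1 hdep).exists_isCircuit_subset
  obtain ⟨e, heC, hmin⟩ := wellFounded_lt.has_min C hC.nonempty
  refine h e (hCX heC) (M.closure_subset_closure ?_ (hC.mem_closure_sdiff_singleton_of_mem heC))
  exact fun x hx => ⟨hCX hx.1, lt_of_le_of_ne (not_lt.1 (hmin x hx.1)) (Ne.symm hx.2)⟩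

theorem existsUnique_forall_mem_iff [WellFoundedGT α] (P : Set α → α → Prop)
    (hP : ∀ S T e, S ∩ Ioi e = T ∩ Ioi e → (P S e ↔ P T e)) :
    ∃! S : Set α, ∀ e, e ∈ S ↔ P S e := by
  let f : α → Prop := WellFoundedGT.fix fun e ih => P {x | ∃ h : e < x, ih x h} e
  have hf (e : α) : f e ↔ P {x | f x} e := by
    refine (iff_of_eq (WellFoundedGT.fix_eq _ e)).trans (hP _ _ _ ?_)
    ext x
    simp only [mem_inter_iff, mem_ofPred_eq, mem_Ioi]
    exact ⟨fun ⟨⟨_, hx⟩, hex⟩ => ⟨hx, hex⟩, fun ⟨hx, hex⟩ => ⟨⟨hex, hx⟩, hex⟩⟩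
  refine ⟨{x | f x}, hf, fun T hT => ?_⟩
  ext e
  induction e using WellFoundedGT.induction with
  | _ e ih =>
  refine (hT e).trans ((hP _ _ _ ?_).trans (hf e).symm)
  ext x
  exact and_congr_left fun hx => ih x hx

def GreedyRule (M : Matroid α) (A S : Set α) (e : α) : Prop :=
  (e ∈ A ∧ e ∉ M.closure (S ∩ Ioi e)) ∨ (e ∉ A ∧ e ∈ M✶.closure (Sᶜ ∩ Ioi e))

theorem greedyRule_congr {T : Set α} (h : S ∩ Ioi e = T ∩ Ioi e) :
    GreedyRule M A S e ↔ GreedyRule M A T e := by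
  have hc : Sᶜ ∩ Ioi e = Tᶜ ∩ Ioi e := by
    ext x
    have := congrArg (x ∈ ·) h
    simp only [mem_inter_iff, mem_compl_iff, mem_Ioi, eq_iff_iff] at this ⊢
    tauto
  rw [GreedyRule, GreedyRule, h, hc]

theorem isBase_of_forall_mem_iff_greedyRule [WellFoundedLT α] (hE : M.E = univ)
    (hS : ∀ e, e ∈ S ↔ GreedyRule M A S e) : M.IsBase S := by
  have hindep : M.Indep S := by
    refine indep_of_forall_notMem_closure_inter_Ioi (hE ▸ subset_univ S) fun e heS hcl => ?_
    rcases (hS e).1 heS with ⟨-, hncl⟩ | ⟨-, hcocl⟩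
    · exact hncl hcl
    · exact notMem_dual_closure_compl_inter_Ioi hcl hcocl
  have hcoindep : M✶.Indep Sᶜ := by
    refine indep_of_forall_notMem_closure_inter_Ioi (by simp [hE]) fun e heS hcocl => ?_
    refine heS ((hS e).2 ?_)
    by_cases heA : e ∈ A
    · exact Or.inl ⟨heA, fun hcl => notMem_dual_closure_compl_inter_Ioi hcl hcocl⟩
    · exact Or.inr ⟨heA, hcocl⟩
  have hspan := Matroid.Coindep.compl_spanning hcoindep
  rw [hE, ← compl_eq_univ_sdiff, compl_compl] at hspan
  exact hindep.isBase_of_spanning hspan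

theorem interval_iff_forall_mem_iff_greedyRule (hE : M.E = univ) (hB : M.IsBase B) :
    (B \ IntSet M B ⊆ A ∧ A ⊆ B ∪ ExtSet M B) ↔ ∀ e, e ∈ B ↔ GreedyRule M A B e := by
  have hBc : M✶.Indep Bᶜ := by
    simpa [hE, ← compl_eq_univ_sdiff] using hB.compl_isBase_dual.indep
  simp only [subset_def, mem_sdiff, mem_union, mem_intSet_iff hE,
    mem_extSet_iff (hE ▸ subset_univ B) (hE ▸ mem_univ _), ← forall_and]
  refine forall_congr' fun e => ?_
  have h1 := hB.indep.notMem_closure_inter_Ioi (e := e)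
  have h2 := hBc.notMem_closure_inter_Ioi (e := e)
  simp only [GreedyRule, mem_compl_iff] at h2 ⊢
  tauto

end

theorem dawson_partition_matroid {α : Type*} [Fintype α] [LinearOrder α]
    (M : Matroid α) (hE : M.E = Set.univ) (A : Set α) :
    ∃! B : Set α, M.IsBase B ∧ B \ IntSet M B ⊆ A ∧ A ⊆ B ∪ ExtSet M B := by
  obtain ⟨S, hS, hS_unique⟩ :=
    existsUnique_forall_mem_iff (GreedyRule M A) fun _ _ _ => greedyRule_congr
  have hSB := isBase_of_forall_mem_iff_greedyRule hE hS
  refine ⟨S, ⟨hSB, (interval_iff_forall_mem_iff_greedyRule hE hSB).2 hS⟩, ?_⟩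
  rintro B ⟨hB, hBA⟩
  exact hS_unique B ((interval_iff_forall_mem_iff_greedyRule hE hB).1 hBA)
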